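/- If W is a β-decomposable matrix and A is a positive semidefinite matrix with all diagonal entries at most α, then W ⊗ A is (α·β)-decomposable. -/

import Mathlib

open Matrix
open scoped Kronecker

def symMat {n m : Type*} (W : Matrix n m ℝ) : Matrix (n ⊕ m) (n ⊕ m) ℝ :=
  Matrix.fromBlocks 0 W Wᵀ 0

def Decomposable {n m : Type*} [Fintype n] [Fintype m]
    (W : Matrix n m ℝ) (β : ℝ) : Prop :=
  ∃ P N : Matrix (n ⊕ m) (n ⊕ m) ℝ, P.PosSemidef ∧ N.PosSemidef ∧
    symMat W = P - N ∧ (∀ i, P i i ≤ β) ∧ (∀ i, N i i ≤ β)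

lemma diag_nn {n : Type*} [Fintype n] [DecidableEq n] {P : Matrix n n ℝ} (hP : P.PosSemidef) (i : n) :
    0 ≤ P i i := by
  exact hP.diag_nonneg

lemma psd_kron {n k : Type*} [Fintype n] [Fintype k] [DecidableEq n] [DecidableEq k]
    {P : Matrix n n ℝ} {A : Matrix k k ℝ} (hP : P.PosSemidef) (hA : A.PosSemidef) :
    (P ⊗ₖ A).PosSemidef := by
  exact hP.kronecker hA

/-- If `W` is `β`-decomposable and `A` is PSD with diagonal entries at most `α`,
then `W ⊗ A` is `(α·β)`-decomposable. -/
theorem decomposable_kronecker (n m k : ℕ) (W : Matrix (Fin n) (Fin m) ℝ) (β : ℝ)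
    (hW : Decomposable W β) (A : Matrix (Fin k) (Fin k) ℝ) (hA : A.PosSemidef)
    (α : ℝ) (hdiag : ∀ i, A i i ≤ α) :
    Decomposable (W ⊗ₖ A) (α * β) := by
  obtain ⟨P, N, hP, hN, hsub, hPd, hNd⟩ := hW
  set e := Equiv.sumProdDistrib (Fin n) (Fin m) (Fin k) with he
  refine ⟨(P ⊗ₖ A).submatrix e.symm e.symm, (N ⊗ₖ A).submatrix e.symm e.symm,
    (psd_kron hP hA).submatrix _, (psd_kron hN hA).submatrix _, ?_, ?_, ?_⟩
  · ext x y
    have hAs : ∀ a b : Fin k, A b a = A a b := fun a b => (star_trivial (A b a)) ▸ hA.1.apply a b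
    have : symMat (W ⊗ₖ A) x y = (symMat W ⊗ₖ A) (e.symm x) (e.symm y) := by
      rcases x with ⟨i, a⟩ | ⟨i, a⟩ <;> rcases y with ⟨j, b⟩ | ⟨j, b⟩ <;>
        simp [symMat, Matrix.kroneckerMap_apply, he, hAs]
    rw [this, hsub]
    simp [Matrix.kroneckerMap_apply, sub_mul]
  · rintro (⟨i, a⟩ | ⟨i, a⟩) <;>
    · simp only [Matrix.submatrix_apply, he, Equiv.sumProdDistrib_symm_apply_left, Equiv.sumProdDistrib_symm_apply_right,
        Matrix.kroneckerMap_apply]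
      rw [mul_comm α β]
      apply mul_le_mul (hPd _) (hdiag _) (diag_nn hA _) ((diag_nn hP _).trans (hPd _))
      first | exact Sum.inl i | exact Sum.inr i
  · rintro (⟨i, a⟩ | ⟨i, a⟩) <;>
    · simp only [Matrix.submatrix_apply, he, Equiv.sumProdDistrib_symm_apply_left, Equiv.sumProdDistrib_symm_apply_right,
        Matrix.kroneckerMap_apply]
      rw [mul_comm α β]
      apply mul_le_mul (hNd _) (hdiag _) (diag_nn hA _) ((diag_nn hN _).trans (hNd _))
      first | exact Sum.inl i | exact Sum.inr i
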